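/- Let ε > 0 and λ satisfy ε < λ < √2·ε. Then for every L > 0 there exists a standing-wave profile ψ for parameters ε, L, λ that is even, strictly positive, and concentrated at the defects: ψ(L) = ψ(−L) and ψ(x) ≤ ψ(L) for all x ∈ ℝ. -/

import Mathlib

open Filter Topology Set

/-- A standing-wave profile for the double delta-well Gross–Pitaevskii equation with
parameters `ε, L, lam`: `ψ` is continuous, decays at `±∞`, has derivative `ψ'` and
satisfies `ψ'' = lam² ψ - 2 ψ³` away from `±L`, and the one-sided limits of `ψ'` at
`±L` exist and jump by `-ε ψ`. -/
def IsStandingWaveProfile (ε L lam : ℝ) (ψ ψ' : ℝ → ℝ) : Prop :=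
  Continuous ψ ∧
  Tendsto ψ atTop (𝓝 0) ∧ Tendsto ψ atBot (𝓝 0) ∧
  (∀ x : ℝ, x ≠ L → x ≠ -L →
    HasDerivAt ψ (ψ' x) x ∧
    HasDerivAt ψ' (lam ^ 2 * ψ x - 2 * ψ x ^ 3) x) ∧
  (∀ x : ℝ, x = L ∨ x = -L →
    ∃ a b : ℝ,
      Tendsto ψ' (𝓝[>] x) (𝓝 a) ∧
      Tendsto ψ' (𝓝[<] x) (𝓝 b) ∧
      a - b = -ε * ψ x)

set_option linter.unusedSectionVars false

noncomputable def swG (lam r φ : ℝ) : ℝ := r + (lam^2 - 2*r) * Real.sin φ ^ 2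

noncomputable def swF (lam r φ : ℝ) : ℝ := Real.sqrt (swG lam r φ)

noncomputable def swTh (lam r y : ℝ) : ℝ := ∫ φ in (0:ℝ)..y, (swF lam r φ)⁻¹

noncomputable def swth (lam r : ℝ) : ℝ → ℝ := Function.invFun (swTh lam r)

section basic

variable {lam r : ℝ} (hr : 0 < r) (hr2 : 2*r < lam^2)

include hr hr2

lemma swG_pos (φ : ℝ) : 0 < swG lam r φ := by
  have h0 : (0:ℝ) ≤ lam^2 - 2*r := by linarith
  have : 0 ≤ (lam^2 - 2*r) * Real.sin φ ^ 2 := by positivity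
  unfold swG; linarith

lemma swG_le (φ : ℝ) : swG lam r φ ≤ lam^2 - r := by
  have hs : Real.sin φ ^ 2 ≤ 1 := Real.sin_sq_le_one φ
  have : (lam^2 - 2*r) * Real.sin φ ^ 2 ≤ (lam^2 - 2*r) * 1 :=
    mul_le_mul_of_nonneg_left hs (by linarith)
  unfold swG; linarith

lemma swG_ge (φ : ℝ) : r ≤ swG lam r φ := by
  have h0 : (0:ℝ) ≤ lam^2 - 2*r := by linarith
  have : 0 ≤ (lam^2 - 2*r) * Real.sin φ ^ 2 := by positivity
  unfold swG; linarith

lemma swF_pos (φ : ℝ) : 0 < swF lam r φ := Real.sqrt_pos.2 (swG_pos hr hr2 φ)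

lemma swF_sq (φ : ℝ) : (swF lam r φ)^2 = swG lam r φ :=
  Real.sq_sqrt (swG_pos hr hr2 φ).le

lemma swF_ge (φ : ℝ) : Real.sqrt r ≤ swF lam r φ :=
  Real.sqrt_le_sqrt (swG_ge hr hr2 φ)

lemma swF_le (φ : ℝ) : swF lam r φ ≤ Real.sqrt (lam^2 - r) :=
  Real.sqrt_le_sqrt (swG_le hr hr2 φ)

end basic

lemma continuous_swG {lam r : ℝ} : Continuous (swG lam r) := by
  unfold swG; continuity

lemma continuous_swF {lam r : ℝ} : Continuous (swF lam r) :=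
  Real.continuous_sqrt.comp continuous_swG

section inv

variable {lam r : ℝ} (hr : 0 < r) (hr2 : 2*r < lam^2)

include hr hr2

lemma continuous_swFinv : Continuous fun φ => (swF lam r φ)⁻¹ :=
  continuous_swF.inv₀ fun φ => (swF_pos hr hr2 φ).ne'

lemma hasDerivAt_swTh (y : ℝ) : HasDerivAt (swTh lam r) (swF lam r y)⁻¹ y :=
  intervalIntegral.integral_hasDerivAt_right
    ((continuous_swFinv hr hr2).intervalIntegrable _ _)
    ((continuous_swFinv hr hr2).stronglyMeasurableAtFilter _ _)
    (continuous_swFinv hr hr2).continuousAt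

lemma continuous_swTh : Continuous (swTh lam r) :=
  continuous_iff_continuousAt.2 fun y => (hasDerivAt_swTh hr hr2 y).continuousAt

lemma swTh_strictMono : StrictMono (swTh lam r) := by
  apply strictMono_of_deriv_pos
  intro y
  rw [(hasDerivAt_swTh hr hr2 y).deriv]
  exact inv_pos.2 (swF_pos hr hr2 y)

lemma swTh_zero : swTh lam r 0 = 0 := intervalIntegral.integral_same

lemma swTh_ge {y : ℝ} (hy : 0 ≤ y) :
    y * (Real.sqrt (lam^2 - r))⁻¹ ≤ swTh lam r y := by
  have hc : 0 < Real.sqrt (lam^2 - r) := Real.sqrt_pos.2 (by linarith)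
  have h1 : (∫ _ in (0:ℝ)..y, (Real.sqrt (lam^2 - r))⁻¹) ≤ swTh lam r y := by
    apply intervalIntegral.integral_mono_on hy
      (intervalIntegrable_const) ((continuous_swFinv hr hr2).intervalIntegrable _ _)
    intro x _
    exact inv_anti₀ (swF_pos hr hr2 x) (swF_le hr hr2 x)
  simpa using h1

lemma swF_even (φ : ℝ) : swF lam r (-φ) = swF lam r φ := by
  unfold swF swG; rw [Real.sin_neg]; ring_nf

lemma swTh_odd (y : ℝ) : swTh lam r (-y) = - swTh lam r y := by
  have h := intervalIntegral.integral_comp_neg (a := y) (b := 0)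
    (f := fun φ => (swF lam r φ)⁻¹)
  simp only [neg_zero] at h
  unfold swTh
  rw [← h]
  rw [intervalIntegral.integral_symm]
  congr 1
  apply intervalIntegral.integral_congr
  intro x _
  simp [swF_even hr hr2]

lemma swTh_tendsto_atTop : Tendsto (swTh lam r) atTop atTop := by
  have hc : 0 < (Real.sqrt (lam^2 - r))⁻¹ :=
    inv_pos.2 (Real.sqrt_pos.2 (by linarith))
  apply tendsto_atTop_mono' atTop
    (eventually_atTop.2 ⟨0, fun y hy => swTh_ge hr hr2 hy⟩)
  exact Tendsto.atTop_mul_const hc tendsto_id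

lemma swTh_tendsto_atBot : Tendsto (swTh lam r) atBot atBot := by
  have h2 : Tendsto (fun y => swTh lam r (-y)) atBot atTop :=
    (swTh_tendsto_atTop hr hr2).comp tendsto_neg_atBot_atTop
  have h3 : Tendsto (fun y => -(swTh lam r (-y))) atBot atBot :=
    tendsto_neg_atTop_atBot.comp h2
  refine h3.congr fun y => ?_
  rw [swTh_odd hr hr2, neg_neg]

lemma swTh_surj : Function.Surjective (swTh lam r) :=
  (continuous_swTh hr hr2).surjective (swTh_tendsto_atTop hr hr2) (swTh_tendsto_atBot hr hr2)

lemma swTh_swth (x : ℝ) : swTh lam r (swth lam r x) = x :=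
  Function.rightInverse_invFun (swTh_surj hr hr2) x

lemma swth_swTh (y : ℝ) : swth lam r (swTh lam r y) = y :=
  Function.leftInverse_invFun (swTh_strictMono hr hr2).injective y

lemma swth_strictMono : StrictMono (swth lam r) := by
  intro a b hab
  have : swTh lam r (swth lam r a) < swTh lam r (swth lam r b) := by
    rw [swTh_swth hr hr2, swTh_swth hr hr2]; exact hab
  exact (swTh_strictMono hr hr2).lt_iff_lt.1 this

lemma continuous_swth : Continuous (swth lam r) := by
  let e : ℝ ≃o ℝ := StrictMono.orderIsoOfSurjective _ (swTh_strictMono hr hr2) (swTh_surj hr hr2)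
  have key : swth lam r = ⇑e.symm := by
    funext x
    apply (swTh_strictMono hr hr2).injective
    rw [swTh_swth hr hr2]
    have : e (e.symm x) = x := e.apply_symm_apply x
    exact this.symm
  rw [key]
  exact e.symm.continuous

lemma hasDerivAt_swth (x : ℝ) :
    HasDerivAt (swth lam r) (swF lam r (swth lam r x)) x := by
  have h := HasDerivAt.of_local_left_inverse
    ((continuous_swth hr hr2).continuousAt (x := x))
    (hasDerivAt_swTh hr hr2 (swth lam r x))
    (inv_ne_zero (swF_pos hr hr2 _).ne')
    (Eventually.of_forall (swTh_swth hr hr2))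
  rwa [inv_inv] at h

lemma swth_zero : swth lam r 0 = 0 := by
  have := swth_swTh hr hr2 0
  rwa [swTh_zero hr hr2] at this

lemma swth_odd (x : ℝ) : swth lam r (-x) = - swth lam r x := by
  apply (swTh_strictMono hr hr2).injective
  rw [swTh_swth hr hr2, swTh_odd hr hr2, swTh_swth hr hr2]

lemma swth_pos {x : ℝ} (hx : 0 < x) : 0 < swth lam r x := by
  have := swth_strictMono hr hr2 hx
  rwa [swth_zero hr hr2] at this

end inv

noncomputable def swPsi (lam r x : ℝ) : ℝ := swF lam r (swth lam r x)

noncomputable def swPsid (lam r x : ℝ) : ℝ :=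
  (lam^2 - 2*r) * Real.sin (swth lam r x) * Real.cos (swth lam r x)

section psi

variable {lam r : ℝ} (hr : 0 < r) (hr2 : 2*r < lam^2)

include hr hr2

lemma swPsi_pos (x : ℝ) : 0 < swPsi lam r x := swF_pos hr hr2 _

lemma swPsi_sq (x : ℝ) :
    (swPsi lam r x)^2 = r + (lam^2 - 2*r) * Real.sin (swth lam r x) ^ 2 :=
  swF_sq hr hr2 _

lemma swPsi_ge (x : ℝ) : Real.sqrt r ≤ swPsi lam r x := swF_ge hr hr2 _

lemma swPsi_le (x : ℝ) : swPsi lam r x ≤ Real.sqrt (lam^2 - r) := swF_le hr hr2 _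

lemma swPsi_even (x : ℝ) : swPsi lam r (-x) = swPsi lam r x := by
  unfold swPsi
  rw [swth_odd hr hr2, swF_even hr hr2]

lemma swPsid_odd (x : ℝ) : swPsid lam r (-x) = - swPsid lam r x := by
  unfold swPsid
  rw [swth_odd hr hr2, Real.sin_neg, Real.cos_neg]; ring

lemma hasDerivAt_swPsi (x : ℝ) : HasDerivAt (swPsi lam r) (swPsid lam r x) x := by
  set θ := swth lam r x with hθdef
  have hθ : HasDerivAt (swth lam r) (swF lam r θ) x := hasDerivAt_swth hr hr2 x
  have hsq : HasDerivAt (fun φ => Real.sin φ ^ 2) (2 * Real.sin θ * Real.cos θ) θ := by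
    have := (Real.hasDerivAt_sin θ).fun_pow 2
    simpa [mul_comm, mul_assoc, mul_left_comm] using this
  have hG : HasDerivAt (swG lam r) ((lam^2 - 2*r) * (2 * Real.sin θ * Real.cos θ)) θ := by
    unfold swG
    simpa using (hsq.const_mul (lam^2 - 2*r)).const_add r
  have hsqrt : HasDerivAt Real.sqrt (1 / (2 * swF lam r θ)) (swG lam r θ) :=
    Real.hasDerivAt_sqrt (swG_pos hr hr2 θ).ne'
  have hcomp : HasDerivAt (swPsi lam r)
      (1 / (2 * swF lam r θ) * ((lam^2 - 2*r) * (2 * Real.sin θ * Real.cos θ) * swF lam r θ)) x := by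
    have h := hsqrt.comp θ hG |>.comp x hθ
    have : ((Real.sqrt ∘ swG lam r) ∘ swth lam r) = swPsi lam r := rfl
    rw [this] at h
    refine h.congr_deriv (Eq.symm ?_)
    ring
  have hFne : swF lam r θ ≠ 0 := (swF_pos hr hr2 θ).ne'
  have : 1 / (2 * swF lam r θ) * ((lam^2 - 2*r) * (2 * Real.sin θ * Real.cos θ) * swF lam r θ)
      = swPsid lam r x := by
    unfold swPsid; rw [← hθdef]; field_simp
  rwa [this] at hcomp

lemma hasDerivAt_swPsid (x : ℝ) :
    HasDerivAt (swPsid lam r) (lam^2 * swPsi lam r x - 2 * swPsi lam r x ^ 3) x := by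
  set θ := swth lam r x with hθdef
  have hθ : HasDerivAt (swth lam r) (swF lam r θ) x := hasDerivAt_swth hr hr2 x
  have h1 : HasDerivAt (fun y => Real.sin (swth lam r y)) (Real.cos θ * swF lam r θ) x :=
    (Real.hasDerivAt_sin θ).comp (h₂ := Real.sin) x hθ
  have h2 : HasDerivAt (fun y => Real.cos (swth lam r y)) (-Real.sin θ * swF lam r θ) x :=
    (Real.hasDerivAt_cos θ).comp (h₂ := Real.cos) x hθ
  have h3 := ((h1.const_mul (lam^2 - 2*r)).mul h2)
  have key : (lam^2 - 2*r) * (Real.cos θ * swF lam r θ) * Real.cos (swth lam r x)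
        + ((lam^2 - 2*r) * Real.sin (swth lam r x)) * (-Real.sin θ * swF lam r θ)
      = lam^2 * swPsi lam r x - 2 * swPsi lam r x ^ 3 := by
    rw [← hθdef]
    have hF2 : (swPsi lam r x)^2 = r + (lam^2 - 2*r) * Real.sin θ ^ 2 := swPsi_sq hr hr2 x
    have hpyth : Real.sin θ ^ 2 + Real.cos θ ^ 2 = 1 := Real.sin_sq_add_cos_sq θ
    have hFψ : swF lam r θ = swPsi lam r x := rfl
    rw [hFψ]
    linear_combination (2 * swPsi lam r x) * hF2 + ((lam^2-2*r) * swPsi lam r x) * hpyth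
  have h4 : HasDerivAt (swPsid lam r) ((lam^2 - 2*r) * (Real.cos θ * swF lam r θ) * Real.cos (swth lam r x)
        + ((lam^2 - 2*r) * Real.sin (swth lam r x)) * (-Real.sin θ * swF lam r θ)) x := by
    have : swPsid lam r = fun y => ((lam^2 - 2*r) * Real.sin (swth lam r y)) * Real.cos (swth lam r y) := by
      funext y; unfold swPsid; ring
    rw [this]
    exact h3
  rwa [key] at h4

lemma swPsid_le (hlam : 0 < lam) (x : ℝ) : swPsid lam r x ≤ lam * swPsi lam r x := by
  set θ := swth lam r x
  set A := lam^2 - 2*r with hA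
  have hApos : 0 < A := by rw [hA]; linarith
  have hψ : 0 < swPsi lam r x := swPsi_pos hr hr2 x
  have hF2 : (swPsi lam r x)^2 = r + A * Real.sin θ ^ 2 := swPsi_sq hr hr2 x
  have hc : Real.cos θ ^ 2 ≤ 1 := Real.cos_sq_le_one θ
  have hAs : (0:ℝ) ≤ A^2 * Real.sin θ ^ 2 := by positivity
  have hstep1 : A^2 * Real.sin θ ^ 2 * Real.cos θ ^ 2 ≤ A^2 * Real.sin θ ^ 2 * 1 :=
    mul_le_mul_of_nonneg_left hc hAs
  have hstep2 : A * (A * Real.sin θ ^ 2) ≤ lam^2 * (A * Real.sin θ ^ 2) :=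
    mul_le_mul_of_nonneg_right (by rw [hA]; linarith)
      (mul_nonneg hApos.le (sq_nonneg _))
  have hsq : (A * Real.sin θ * Real.cos θ)^2 ≤ (lam * swPsi lam r x)^2 := by
    nlinarith [hstep1, hstep2, hF2]
  have h1 : swPsid lam r x ≤ |A * Real.sin θ * Real.cos θ| := le_abs_self _
  calc swPsid lam r x ≤ |A * Real.sin θ * Real.cos θ| := h1
    _ ≤ |lam * swPsi lam r x| := by
        rw [← Real.sqrt_sq_eq_abs, ← Real.sqrt_sq_eq_abs]
        exact Real.sqrt_le_sqrt hsq
    _ = lam * swPsi lam r x := abs_of_pos (by positivity)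

end psi

section growth

variable {lam r : ℝ} (hr : 0 < r) (hr2 : 2*r < lam^2) (hlam : 0 < lam)

include hr hr2 hlam

lemma swPsi_zero_sq : (swPsi lam r 0)^2 = r := by
  rw [swPsi_sq hr hr2, swth_zero hr hr2]
  simp

lemma swPsi_sq_le_exp {x : ℝ} (hx : 0 ≤ x) :
    (swPsi lam r x)^2 ≤ r * Real.exp (2*lam*x) := by
  set q : ℝ → ℝ := fun y => (swPsi lam r y)^2 * Real.exp (-(2*lam*y)) with hq
  have hderiv : ∀ y, HasDerivAt q
      (2 * swPsi lam r y * swPsid lam r y * Real.exp (-(2*lam*y))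
        + (swPsi lam r y)^2 * (Real.exp (-(2*lam*y)) * (-(2*lam)))) y := by
    intro y
    have h1 : HasDerivAt (fun z => (swPsi lam r z)^2) (2 * swPsi lam r y * swPsid lam r y) y := by
      have := (hasDerivAt_swPsi hr hr2 y).fun_pow 2
      simpa [mul_comm, mul_assoc] using this
    have h2 : HasDerivAt (fun z => Real.exp (-(2*lam*z))) (Real.exp (-(2*lam*y)) * (-(2*lam))) y := by
      have hlin : HasDerivAt (fun z : ℝ => -(2*lam*z)) (-(2*lam)) y := by
        simpa using ((hasDerivAt_id y).const_mul (2*lam)).fun_neg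
      exact (Real.hasDerivAt_exp _).comp y hlin
    exact h1.mul h2
  have hanti : Antitone q := by
    apply antitone_of_deriv_nonpos
    · intro y; exact (hderiv y).differentiableAt
    · intro y
      rw [(hderiv y).deriv]
      have hb : swPsid lam r y ≤ lam * swPsi lam r y := swPsid_le hr hr2 hlam y
      have hψ : 0 < swPsi lam r y := swPsi_pos hr hr2 y
      have he : 0 < Real.exp (-(2*lam*y)) := Real.exp_pos _
      nlinarith [mul_le_mul_of_nonneg_left hb (by positivity : (0:ℝ) ≤ 2 * swPsi lam r y * Real.exp (-(2*lam*y)))]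
  have h0 : q x ≤ q 0 := hanti hx
  have hq0 : q 0 = r := by
    rw [hq]; simp [swPsi_zero_sq hr hr2 hlam]
  rw [hq0] at h0
  have := mul_le_mul_of_nonneg_right h0 (Real.exp_pos (2*lam*x)).le
  rw [hq] at this
  have hrw : swPsi lam r x ^ 2 * Real.exp (-(2 * lam * x)) * Real.exp (2 * lam * x)
      = swPsi lam r x ^ 2 := by
    rw [mul_assoc, ← Real.exp_add]
    simp
  simp only [hrw] at this
  exact this

lemma swth_lt_pi_div_two {L' : ℝ} (hL' : 0 ≤ L')
    (hgrow : r * Real.exp (2*lam*L') < lam^2 - r) :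
    swth lam r L' < Real.pi / 2 := by
  by_contra hcon
  push_neg at hcon
  have hθ0 : swth lam r 0 = 0 := swth_zero hr hr2
  have hcont : ContinuousOn (swth lam r) (Icc 0 L') :=
    (continuous_swth hr hr2).continuousOn
  have hmem : Real.pi / 2 ∈ Icc (swth lam r 0) (swth lam r L') := by
    constructor
    · rw [hθ0]; positivity
    · exact hcon
  obtain ⟨x₀, hx₀, hθx₀⟩ := intermediate_value_Icc hL' hcont hmem
  have h1 : (swPsi lam r x₀)^2 = lam^2 - r := by
    rw [swPsi_sq hr hr2, hθx₀]
    simp [Real.sin_pi_div_two]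
    ring
  have h2 : (swPsi lam r x₀)^2 ≤ r * Real.exp (2*lam*x₀) := swPsi_sq_le_exp hr hr2 hlam hx₀.1
  have h3 : r * Real.exp (2*lam*x₀) ≤ r * Real.exp (2*lam*L') := by
    apply mul_le_mul_of_nonneg_left _ hr.le
    exact Real.exp_le_exp.2 (by nlinarith [hx₀.2])
  linarith

end growth

section param

variable {lam : ℝ} {r₀ : ℝ} (hr₀ : 0 < r₀) (hr₀2 : 2*r₀ < lam^2)

include hr₀ hr₀2

lemma swTh_continuousAt_param (y : ℝ) :
    ContinuousAt (fun r => swTh lam r y) r₀ := by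
  apply intervalIntegral.continuousAt_of_dominated_interval
    (bound := fun _ => (Real.sqrt (r₀/2))⁻¹)
  · filter_upwards with r
    exact ((continuous_swF (lam := lam) (r := r)).measurable.inv).aestronglyMeasurable
  · have hmem : Ioo (r₀/2) (lam^2/2) ∈ 𝓝 r₀ :=
      Ioo_mem_nhds (by linarith) (by linarith)
    filter_upwards [hmem] with r hrmem
    filter_upwards with φ _
    have hra : 0 < r := lt_trans (by linarith) hrmem.1
    have hrb : 2*r < lam^2 := by have := hrmem.2; linarith
    have h1 : Real.sqrt (r₀/2) ≤ swF lam r φ := by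
      refine le_trans ?_ (swF_ge hra hrb φ)
      exact Real.sqrt_le_sqrt hrmem.1.le
    have h2 : 0 < Real.sqrt (r₀/2) := Real.sqrt_pos.2 (by linarith)
    rw [Real.norm_eq_abs, abs_of_pos (inv_pos.2 (swF_pos hra hrb φ))]
    exact inv_anti₀ h2 h1
  · exact intervalIntegrable_const
  · filter_upwards with φ _
    have hcont : ContinuousAt (fun r => swF lam r φ) r₀ := by
      apply Real.continuous_sqrt.continuousAt.comp
      apply ContinuousAt.add continuousAt_id
      exact (continuousAt_const.sub (continuousAt_const.mul continuousAt_id)).mul continuousAt_const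
    exact hcont.inv₀ (swF_pos hr₀ hr₀2 φ).ne'

lemma swth_continuousAt_param (L : ℝ) :
    ContinuousAt (fun r => swth lam r L) r₀ := by
  have hcond : ∀ᶠ r in 𝓝 r₀, 0 < r ∧ 2*r < lam^2 := by
    have h1 : ∀ᶠ r in 𝓝 r₀, 0 < r := eventually_gt_nhds hr₀
    have h2 : ∀ᶠ r in 𝓝 r₀, r < lam^2/2 := eventually_lt_nhds (by linarith)
    filter_upwards [h1, h2] with r ha hb
    exact ⟨ha, by linarith⟩
  rw [ContinuousAt]
  apply tendsto_order.2
  constructor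
  · intro b hb
    have h1 : swTh lam r₀ b < L := by
      have := (swTh_strictMono hr₀ hr₀2) hb
      rwa [swTh_swth hr₀ hr₀2] at this
    have h2 : ∀ᶠ r in 𝓝 r₀, swTh lam r b < L :=
      (swTh_continuousAt_param hr₀ hr₀2 b).eventually_lt_const h1
    filter_upwards [h2, hcond] with r h2r hc
    have : swTh lam r b < swTh lam r (swth lam r L) := by
      rw [swTh_swth hc.1 hc.2]; exact h2r
    exact (swTh_strictMono hc.1 hc.2).lt_iff_lt.1 this
  · intro b hb
    have h1 : L < swTh lam r₀ b := by
      have := (swTh_strictMono hr₀ hr₀2) hb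
      rwa [swTh_swth hr₀ hr₀2] at this
    have h2 : ∀ᶠ r in 𝓝 r₀, L < swTh lam r b :=
      (swTh_continuousAt_param hr₀ hr₀2 b).eventually_const_lt h1
    filter_upwards [h2, hcond] with r h2r hc
    have : swTh lam r (swth lam r L) < swTh lam r b := by
      rw [swTh_swth hc.1 hc.2]; exact h2r
    exact (swTh_strictMono hc.1 hc.2).lt_iff_lt.1 this

end param

noncomputable def swE (lam a y : ℝ) : ℝ := lam / Real.cosh (lam*(y-a))

noncomputable def swEd (lam a y : ℝ) : ℝ :=
  -(lam^2) * Real.sinh (lam*(y-a)) / Real.cosh (lam*(y-a))^2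

section ext

variable {lam a : ℝ} (hlam : 0 < lam)

include hlam

lemma swE_pos (y : ℝ) : 0 < swE lam a y := div_pos hlam (Real.cosh_pos _)

lemma hasDerivAt_lin (y : ℝ) : HasDerivAt (fun z : ℝ => lam*(z-a)) lam y := by
  simpa using ((hasDerivAt_id y).sub_const a).const_mul lam

lemma hasDerivAt_swE (y : ℝ) : HasDerivAt (swE lam a) (swEd lam a y) y := by
  have hc : HasDerivAt (fun z => Real.cosh (lam*(z-a)))
      (Real.sinh (lam*(y-a)) * lam) y :=
    (Real.hasDerivAt_cosh _).comp y (hasDerivAt_lin hlam y)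
  have h := (hasDerivAt_const y lam).fun_div hc (Real.cosh_pos (lam*(y-a))).ne'
  refine h.congr_deriv (Eq.symm ?_)
  unfold swEd
  field_simp
  ring

lemma hasDerivAt_swEd (y : ℝ) :
    HasDerivAt (swEd lam a) (lam^2 * swE lam a y - 2 * swE lam a y ^ 3) y := by
  set u := lam*(y-a) with hu
  have hs : HasDerivAt (fun z => -(lam^2) * Real.sinh (lam*(z-a)))
      (-(lam^2) * (Real.cosh u * lam)) y :=
    (((Real.hasDerivAt_sinh u).comp y (hasDerivAt_lin hlam y)).const_mul _)
  have hc2 : HasDerivAt (fun z => Real.cosh (lam*(z-a))^2)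
      (2 * Real.cosh u * (Real.sinh u * lam)) y := by
    have h1 : HasDerivAt (fun z => Real.cosh (lam*(z-a))) (Real.sinh u * lam) y :=
      (Real.hasDerivAt_cosh _).comp y (hasDerivAt_lin hlam y)
    have := h1.fun_pow 2
    simpa [mul_comm, mul_assoc] using this
  have h := hs.fun_div hc2 (by positivity : (Real.cosh u ^ 2) ≠ 0)
  refine h.congr_deriv (Eq.symm ?_)
  unfold swE
  rw [← hu]
  have hcs : Real.cosh u ^ 2 = Real.sinh u ^2 + 1 := Real.cosh_sq u
  have hcne : Real.cosh u ≠ 0 := (Real.cosh_pos u).ne'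
  field_simp
  ring_nf
  linear_combination 2 * hcs

lemma swE_antitoneOn {L y : ℝ} (hw : 0 ≤ lam*(L-a)) (hy : L ≤ y) :
    swE lam a y ≤ swE lam a L := by
  unfold swE
  have h1 : Real.cosh (lam*(L-a)) ≤ Real.cosh (lam*(y-a)) := by
    rw [Real.cosh_le_cosh]
    rw [abs_of_nonneg hw, abs_of_nonneg (by nlinarith : (0:ℝ) ≤ lam*(y-a))]
    nlinarith
  gcongr


lemma swE_tendsto_atTop : Tendsto (swE lam a) atTop (𝓝 0) := by
  apply Tendsto.div_atTop (tendsto_const_nhds)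
  have hlin : Tendsto (fun y : ℝ => lam*(y-a)) atTop atTop := by
    apply Tendsto.const_mul_atTop hlam
    exact tendsto_atTop_add_const_right atTop (-a) tendsto_id
  apply tendsto_atTop_mono (fun y => ?_)
    ((Real.tendsto_exp_atTop.comp hlin).atTop_div_const (by norm_num) :
      Tendsto (fun y => Real.exp (lam*(y-a)) / 2) atTop atTop)
  rw [Real.cosh_eq]
  have := (Real.exp_pos (-(lam*(y-a)))).le
  linarith

end ext

set_option maxHeartbeats 2000000 in
lemma sw_main {ε lam L : ℝ} (hε : 0 < ε) (h1 : ε < lam) (hlam2 : lam^2 < 2*ε^2) (hL : 0 < L) :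
    ∃ r : ℝ, 0 < r ∧ 2*r < lam^2 ∧ 0 < swth lam r L ∧ swth lam r L < Real.pi/2 ∧
      swPsid lam r L = swPsi lam r L * (ε - Real.sqrt (lam^2 - (swPsi lam r L)^2)) := by
  have hlam : 0 < lam := lt_trans hε h1
  set g : ℝ → ℝ := fun r => swth lam r L with hgdef
  set P : ℝ → ℝ := fun r => swPsi lam r L with hPdef
  set D : ℝ → ℝ := fun r => swPsid lam r L with hDdef
  set Hf : ℝ → ℝ := fun r => D r - P r * (ε - Real.sqrt (lam^2 - (P r)^2)) with hHdef
  -- continuity facts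
  have hPg : ∀ r, P r = Real.sqrt (r + (lam^2-2*r) * Real.sin (g r)^2) := fun r => rfl
  have hDg : ∀ r, D r = (lam^2-2*r) * Real.sin (g r) * Real.cos (g r) := fun r => rfl
  have hHc : ∀ r ∈ Ioo (0:ℝ) (lam^2/2), ContinuousAt Hf r := by
    intro r hr
    have hga : ContinuousAt g r := swth_continuousAt_param hr.1 (by nlinarith [hr.2]) L
    have haux : ContinuousAt (fun r => r + (lam^2-2*r) * Real.sin (g r)^2) r := by
      fun_prop
    have hPa : ContinuousAt P r := by
      have : P = fun r => Real.sqrt (r + (lam^2-2*r) * Real.sin (g r)^2) := funext hPg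
      rw [this]
      exact Real.continuous_sqrt.continuousAt.comp haux
    have hDa : ContinuousAt D r := by
      have : D = fun r => (lam^2-2*r) * Real.sin (g r) * Real.cos (g r) := funext hDg
      rw [this]
      fun_prop
    apply hDa.sub
    apply hPa.mul
    apply continuousAt_const.sub
    exact Real.continuous_sqrt.continuousAt.comp (continuousAt_const.sub (hPa.pow 2))
  have hgc : ∀ r ∈ Ioo (0:ℝ) (lam^2/2), ContinuousAt g r := by
    intro r hr
    exact swth_continuousAt_param hr.1 (by nlinarith [hr.2]) L
  -- left endpoint r_a
  set ra : ℝ := (lam^2 - ε^2) * Real.exp (-(2*lam*L)) / 2 with hradef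
  have hre : 0 < lam^2 - ε^2 := by nlinarith
  have hra0 : 0 < ra := by positivity
  have hraexp : ra * Real.exp (2*lam*L) = (lam^2 - ε^2)/2 := by
    rw [hradef]
    rw [div_mul_eq_mul_div, mul_assoc, ← Real.exp_add]
    simp
  have hexplt : Real.exp (-(2*lam*L)) < 1 := by
    rw [Real.exp_lt_one_iff]
    nlinarith
  have hralt : ra < (lam^2 - ε^2)/2 := by
    rw [hradef]
    rw [div_lt_div_iff_of_pos_right (by norm_num : (0:ℝ) < 2)]
    nlinarith
  have hra2 : 2*ra < lam^2 := by nlinarith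
  have hramem : ra ∈ Ioo (0:ℝ) (lam^2/2) := ⟨hra0, by nlinarith⟩
  -- properties at ra
  have hga_lt : g ra < Real.pi/2 := by
    apply swth_lt_pi_div_two hra0 hra2 hlam hL.le
    rw [hraexp]; nlinarith
  have hga_pos : 0 < g ra := swth_pos hra0 hra2 hL
  have hPa_sq : (P ra)^2 ≤ (lam^2-ε^2)/2 := by
    rw [← hraexp]
    exact swPsi_sq_le_exp hra0 hra2 hlam hL.le
  have hHa : 0 < Hf ra := by
    have hDa : 0 ≤ D ra := by
      rw [hDg]
      have hs : 0 ≤ Real.sin (g ra) := Real.sin_nonneg_of_nonneg_of_le_pi hga_pos.le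
        (by linarith [Real.pi_pos, hga_lt])
      have hc : 0 ≤ Real.cos (g ra) := by
        apply Real.cos_nonneg_of_mem_Icc
        constructor <;> [linarith [Real.pi_pos]; linarith]
      have : (0:ℝ) ≤ lam^2 - 2*ra := by linarith
      positivity
    have hsq : ε < Real.sqrt (lam^2 - (P ra)^2) := by
      rw [Real.lt_sqrt hε.le]
      nlinarith
    have hPpos : 0 < P ra := swPsi_pos hra0 hra2 L
    have : P ra * (ε - Real.sqrt (lam^2 - (P ra)^2)) < 0 :=
      mul_neg_of_pos_of_neg hPpos (by linarith)
    rw [hHdef]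
    simp only
    linarith
  -- right endpoint r_b
  set k : ℝ → ℝ := fun r => (lam^2 - 2*r) - Real.sqrt r * (ε - Real.sqrt (lam^2 - r)) with hkdef
  have hkc : ContinuousAt k (lam^2/2) := by fun_prop
  have hsqhalf : Real.sqrt (lam^2/2) < ε := by
    rw [Real.sqrt_lt' hε]
    nlinarith
  have hsqhalf' : 0 < Real.sqrt (lam^2/2) := Real.sqrt_pos.2 (by positivity)
  have hkval : k (lam^2/2) < 0 := by
    rw [hkdef]
    simp only
    have : lam^2 - lam^2/2 = lam^2/2 := by ring
    rw [this]
    nlinarith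
  have hev : ∀ᶠ r in 𝓝[<] (lam^2/2),
      k r < 0 ∧ lam^2 - r < ε^2 ∧ ra < r ∧ 0 < r ∧ r < lam^2/2 := by
    have e1 : ∀ᶠ r in 𝓝 (lam^2/2), k r < 0 := hkc.eventually_lt_const hkval
    have e2 : ∀ᶠ r in 𝓝 (lam^2/2), lam^2 - r < ε^2 := by
      have : ContinuousAt (fun r : ℝ => lam^2 - r) (lam^2/2) := by fun_prop
      apply this.eventually_lt_const
      nlinarith
    have e3 : ∀ᶠ r in 𝓝 (lam^2/2), ra < r := eventually_gt_nhds hramem.2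
    have e4 : ∀ᶠ r in 𝓝 (lam^2/2), 0 < r := eventually_gt_nhds (by positivity)
    have e5 : ∀ᶠ r in 𝓝[<] (lam^2/2), r < lam^2/2 := eventually_mem_nhdsWithin
    filter_upwards [(e1.and (e2.and (e3.and e4))).filter_mono nhdsWithin_le_nhds, e5] with
      r hr hr5
    exact ⟨hr.1, hr.2.1, hr.2.2.1, hr.2.2.2, hr5⟩
  obtain ⟨rb, hkb, hrbe, hrab, hrb0, hrbhalf⟩ := hev.exists
  have hrb2 : 2*rb < lam^2 := by linarith
  have hHb : Hf rb < 0 := by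
    have hPb : Real.sqrt rb ≤ P rb := swPsi_ge hrb0 hrb2 L
    have hPb2 : rb ≤ (P rb)^2 := by
      have := swPsi_sq hrb0 hrb2 (lam := lam) L
      nlinarith [sq_nonneg (Real.sin (swth lam rb L)), hrb2]
    have hsb : Real.sqrt (lam^2 - (P rb)^2) ≤ Real.sqrt (lam^2 - rb) :=
      Real.sqrt_le_sqrt (by linarith)
    have hsb2 : Real.sqrt (lam^2 - rb) < ε := by
      rw [Real.sqrt_lt' hε]
      nlinarith
    have hDb : D rb ≤ lam^2 - 2*rb := by
      rw [hDg]
      have h1 : Real.sin (g rb) * Real.cos (g rb) ≤ 1 := by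
        nlinarith [Real.sin_sq_add_cos_sq (g rb), sq_nonneg (Real.sin (g rb) - Real.cos (g rb))]
      nlinarith [h1, hrb2]
    have hprod : Real.sqrt rb * (ε - Real.sqrt (lam^2 - rb)) ≤
        P rb * (ε - Real.sqrt (lam^2 - (P rb)^2)) := by
      exact mul_le_mul hPb (by linarith) (by linarith [hsb2, hsb]) (le_trans (Real.sqrt_nonneg rb) hPb)
    have : Hf rb ≤ k rb := by
      rw [hHdef, hkdef]
      simp only
      linarith
    linarith
  -- the sInf argument
  set S : Set ℝ := {r ∈ Icc ra rb | Hf r ≤ 0 ∨ Real.pi/2 ≤ g r} with hSdef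
  have hIccsub : Icc ra rb ⊆ Ioo 0 (lam^2/2) := fun r hr =>
    ⟨lt_of_lt_of_le hra0 hr.1, lt_of_le_of_lt hr.2 hrbhalf⟩
  have hSclosed : IsClosed S := by
    have hHon : ContinuousOn Hf (Icc ra rb) := fun r hr =>
      (hHc r (hIccsub hr)).continuousWithinAt
    have hgon : ContinuousOn g (Icc ra rb) := fun r hr =>
      (hgc r (hIccsub hr)).continuousWithinAt
    have : S = (Icc ra rb ∩ Hf ⁻¹' Iic 0) ∪ (Icc ra rb ∩ g ⁻¹' Ici (Real.pi/2)) := by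
      ext r
      simp only [hSdef, mem_setOf_eq, mem_union, mem_inter_iff, mem_preimage, mem_Iic, mem_Ici]
      tauto
    rw [this]
    exact (hHon.preimage_isClosed_of_isClosed isClosed_Icc isClosed_Iic).union
      (hgon.preimage_isClosed_of_isClosed isClosed_Icc isClosed_Ici)
  have hSne : S.Nonempty := ⟨rb, ⟨⟨hrab.le, le_refl _⟩, Or.inl hHb.le⟩⟩
  have hSbdd : BddBelow S := ⟨ra, fun r hr => hr.1.1⟩
  set rs := sInf S with hrsdef
  have hrsS : rs ∈ S := hSclosed.csInf_mem hSne hSbdd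
  have hrsIcc : rs ∈ Icc ra rb := hrsS.1
  have hrs0 : 0 < rs := lt_of_lt_of_le hra0 hrsIcc.1
  have hrs2 : 2*rs < lam^2 := by
    have := lt_of_le_of_lt hrsIcc.2 hrbhalf
    linarith
  have hraS : ra ∉ S := by
    intro hmem
    rcases hmem.2 with h | h
    · linarith
    · linarith
  have hrs_gt : ra < rs := lt_of_le_of_ne hrsIcc.1 (fun h => hraS (h ▸ hrsS))
  have hbelow : ∀ r, ra ≤ r → r < rs → 0 < Hf r ∧ g r < Real.pi/2 := by
    intro r hr1 hr2
    have hnot : r ∉ S := fun hmem => absurd (csInf_le hSbdd hmem) (not_le.2 hr2)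
    have hrIcc : r ∈ Icc ra rb := ⟨hr1, le_trans hr2.le hrsIcc.2⟩
    by_contra hcon
    push_neg at hcon
    apply hnot
    refine ⟨hrIcc, ?_⟩
    by_cases hh : Hf r ≤ 0
    · exact Or.inl hh
    · exact Or.inr (hcon (not_le.1 hh |> lt_of_lt_of_le <| le_refl _))
  -- limits from the left at rs
  have hHrs_nonneg : 0 ≤ Hf rs := by
    have hto : Tendsto Hf (𝓝[<] rs) (𝓝 (Hf rs)) :=
      ((hHc rs (hIccsub hrsIcc)).continuousWithinAt).tendsto
    have hev2 : ∀ᶠ r in 𝓝[<] rs, 0 ≤ Hf r := by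
      have hmem : Ioo ra rs ∈ 𝓝[<] rs := by
        apply Ioo_mem_nhdsLT_of_mem
        exact ⟨hrs_gt, le_refl _⟩
      filter_upwards [hmem] with r hr
      exact (hbelow r hr.1.le hr.2).1.le
    exact ge_of_tendsto hto hev2
  have hgrs_le : g rs ≤ Real.pi/2 := by
    have hto : Tendsto g (𝓝[<] rs) (𝓝 (g rs)) :=
      ((hgc rs (hIccsub hrsIcc)).continuousWithinAt).tendsto
    have hev2 : ∀ᶠ r in 𝓝[<] rs, g r ≤ Real.pi/2 := by
      have hmem : Ioo ra rs ∈ 𝓝[<] rs := by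
        apply Ioo_mem_nhdsLT_of_mem
        exact ⟨hrs_gt, le_refl _⟩
      filter_upwards [hmem] with r hr
      exact (hbelow r hr.1.le hr.2).2.le
    exact le_of_tendsto hto hev2
  -- rule out g rs = π/2
  have hghalf : g rs ≠ Real.pi/2 := by
    intro heq
    have hsin : Real.sin (g rs) = 1 := by rw [heq]; exact Real.sin_pi_div_two
    have hcos : Real.cos (g rs) = 0 := by rw [heq]; exact Real.cos_pi_div_two
    have hD0 : D rs = 0 := by rw [hDg, hcos]; ring
    have hP2 : (P rs)^2 = lam^2 - rs := by
      have := swPsi_sq hrs0 hrs2 (lam := lam) L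
      rw [hPdef]
      simp only
      rw [this]
      have : Real.sin (swth lam rs L) = 1 := hsin
      rw [this]
      ring
    have hsq : Real.sqrt (lam^2 - (P rs)^2) = Real.sqrt rs := by
      rw [hP2]; congr 1; ring
    have hsqlt : Real.sqrt rs < ε := by
      rw [Real.sqrt_lt' hε]
      nlinarith [hrsIcc.2, hrbhalf]
    have hPpos : 0 < P rs := swPsi_pos hrs0 hrs2 L
    have : Hf rs < 0 := by
      rw [hHdef]
      simp only
      rw [hD0, hsq]
      have : 0 < P rs * (ε - Real.sqrt rs) := by
        apply mul_pos hPpos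
        linarith
      linarith
    linarith
  have hgrs_lt : g rs < Real.pi/2 := lt_of_le_of_ne hgrs_le hghalf
  -- H rs ≤ 0 from membership
  have hHrs_le : Hf rs ≤ 0 := by
    rcases hrsS.2 with h | h
    · exact h
    · exact absurd (le_antisymm hgrs_le h) hghalf
  have hHrs : Hf rs = 0 := le_antisymm hHrs_le hHrs_nonneg
  refine ⟨rs, hrs0, hrs2, swth_pos hrs0 hrs2 hL, hgrs_lt, ?_⟩
  have := hHrs
  rw [hHdef] at this
  simp only at this
  rw [hDdef, hPdef] at this
  simp only at this
  linarith

set_option maxHeartbeats 2000000 in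
/-- for `ε < lam < √2 ε` and every `L > 0` there is an even, strictly
positive standing-wave profile concentrated at the defects. -/
theorem exists_symmetric_standing_wave_concentrated_regime2 (ε lam : ℝ)
    (hε : 0 < ε) (h1 : ε < lam) (h2 : lam < Real.sqrt 2 * ε) :
    ∀ L : ℝ, 0 < L →
      ∃ ψ ψ' : ℝ → ℝ, IsStandingWaveProfile ε L lam ψ ψ' ∧
        (∀ x : ℝ, ψ (-x) = ψ x) ∧ (∀ x : ℝ, 0 < ψ x) ∧
        ψ L = ψ (-L) ∧ (∀ x : ℝ, ψ x ≤ ψ L) := by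
  intro L hL
  have hlam : 0 < lam := lt_trans hε h1
  have hlam2 : lam^2 < 2*ε^2 := by
    have hs := Real.sq_sqrt (by norm_num : (0:ℝ) ≤ 2)
    nlinarith [Real.sqrt_nonneg 2]
  obtain ⟨r, hr0, hr2, hgpos, hglt, hmatch⟩ := sw_main hε h1 hlam2 hL
  set θL := swth lam r L with hθLdef
  set c := swPsi lam r L with hcdef
  set s := Real.sqrt (lam^2 - c^2) with hsdef
  have hπ := Real.pi_pos
  have hcpos : 0 < c := swPsi_pos hr0 hr2 L
  have hsinpos : 0 < Real.sin θL :=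
    Real.sin_pos_of_pos_of_lt_pi hgpos (by linarith)
  have hcospos : 0 < Real.cos θL :=
    Real.cos_pos_of_mem_Ioo ⟨by linarith, hglt⟩
  have hc2lt : c^2 < lam^2 := by
    have hsq : c^2 = r + (lam^2 - 2*r) * Real.sin θL ^ 2 := swPsi_sq hr0 hr2 L
    have hsin1 : Real.sin θL < 1 := by
      nlinarith [Real.sin_sq_add_cos_sq θL]
    have hsinsq : Real.sin θL ^ 2 < 1 := by nlinarith
    nlinarith [hsinsq]
  have hs2 : s^2 = lam^2 - c^2 := Real.sq_sqrt (by linarith)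
  have hspos : 0 < s := Real.sqrt_pos.2 (by linarith)
  have hDpos : 0 < swPsid lam r L := by
    unfold swPsid
    rw [← hθLdef]
    have : (0:ℝ) < lam^2 - 2*r := by linarith
    positivity
  have hεs : 0 < ε - s := by
    rw [hmatch] at hDpos
    rcases mul_pos_iff.1 hDpos with ⟨_, h⟩ | ⟨h, _⟩
    · linarith
    · linarith
  -- exterior parameters
  set w := Real.arsinh (s/c) with hwdef
  set aa := L - w/lam with haadef
  have hwL : lam*(L-aa) = w := by
    rw [haadef]; field_simp; ring
  have hwpos : 0 < w := Real.arsinh_pos_iff.2 (by positivity)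
  have hcoshw : Real.cosh w = lam/c := by
    rw [hwdef, Real.cosh_arsinh]
    have : (1 : ℝ) + (s/c)^2 = (lam/c)^2 := by
      field_simp
      linarith
    rw [this, Real.sqrt_sq (by positivity)]
  have hsinhw : Real.sinh w = s/c := Real.sinh_arsinh _
  have hEL : swE lam aa L = c := by
    unfold swE
    rw [hwL, hcoshw]
    field_simp
  have hEdL : swEd lam aa L = -(s*c) := by
    unfold swEd
    rw [hwL, hcoshw, hsinhw]
    field_simp
  -- global profile
  set ψ : ℝ → ℝ := fun x => if |x| ≤ L then swPsi lam r x else swE lam aa |x| with hψdef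
  set ψd : ℝ → ℝ := fun x => if |x| < L then swPsid lam r x else
    if 0 ≤ x then swEd lam aa x else -swEd lam aa (-x) with hψddef
  have hcontPsi : Continuous (swPsi lam r) :=
    continuous_iff_continuousAt.2 fun x => (hasDerivAt_swPsi hr0 hr2 x).continuousAt
  have hcontPsid : Continuous (swPsid lam r) :=
    continuous_iff_continuousAt.2 fun x => (hasDerivAt_swPsid hr0 hr2 x).continuousAt
  have hcontE : Continuous (swE lam aa) :=
    continuous_iff_continuousAt.2 fun x => (hasDerivAt_swE hlam x).continuousAt
  have hcontEd : Continuous (swEd lam aa) :=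
    continuous_iff_continuousAt.2 fun x => (hasDerivAt_swEd hlam x).continuousAt
  have hψL : ψ L = c := by
    rw [hψdef]
    simp only
    rw [abs_of_pos hL, if_pos (le_refl L)]
  have hψeven : ∀ x, ψ (-x) = ψ x := by
    intro x
    rw [hψdef]
    simp only [abs_neg]
    by_cases h : |x| ≤ L
    · rw [if_pos h, if_pos h, swPsi_even hr0 hr2]
    · rw [if_neg h, if_neg h]
  have hagree : ∀ x : ℝ, |x| = L → swPsi lam r x = swE lam aa |x| := by
    intro x hx
    rw [hx, hEL]
    rcases abs_eq (le_of_lt hL) |>.1 hx with h | h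
    · rw [h]
    · rw [h, swPsi_even hr0 hr2]
  have hψcont : Continuous ψ := by
    rw [hψdef]
    exact Continuous.if_le hcontPsi (hcontE.comp continuous_abs) continuous_abs
      continuous_const hagree
  have hψpos : ∀ x, 0 < ψ x := by
    intro x
    rw [hψdef]
    simp only
    split
    · exact swPsi_pos hr0 hr2 x
    · exact swE_pos hlam _
  have hψsymm : ψ L = ψ (-L) := (hψeven L).symm
  -- concentration
  have hconc : ∀ x, ψ x ≤ ψ L := by
    intro x
    rw [hψL, hψdef]
    simp only
    by_cases h : |x| ≤ L
    · rw [if_pos h]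
      have hθabs : swth lam r |x| ≤ θL := by
        rcases eq_or_lt_of_le h with heq | hlt
        · rw [heq]
        · exact le_of_lt (swth_strictMono hr0 hr2 hlt)
      have hθnn : 0 ≤ swth lam r |x| := by
        rcases eq_or_lt_of_le (abs_nonneg x) with heq | hlt
        · rw [← heq, swth_zero hr0 hr2]
        · exact (swth_pos hr0 hr2 hlt).le
      have hsinle : Real.sin (swth lam r |x|) ≤ Real.sin θL := by
        apply Real.strictMonoOn_sin.monotoneOn ⟨by linarith, by linarith⟩
          ⟨by linarith, hglt.le⟩ hθabs
      have hsinnn : 0 ≤ Real.sin (swth lam r |x|) :=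
        Real.sin_nonneg_of_nonneg_of_le_pi hθnn (by linarith)
      have hsq : (swPsi lam r |x|)^2 ≤ c^2 := by
        rw [swPsi_sq hr0 hr2, hcdef, swPsi_sq hr0 hr2, ← hθLdef]
        have : Real.sin (swth lam r |x|)^2 ≤ Real.sin θL^2 := by nlinarith
        nlinarith [this, hr2]
      have habs : swPsi lam r |x| ≤ c := by
        have h1 : swPsi lam r |x| = Real.sqrt ((swPsi lam r |x|)^2) :=
          (Real.sqrt_sq (swPsi_pos hr0 hr2 _).le).symm
        have h2 : c = Real.sqrt (c^2) := (Real.sqrt_sq hcpos.le).symm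
        rw [h1, h2]
        exact Real.sqrt_le_sqrt hsq
      calc swPsi lam r x ≤ swPsi lam r |x| := by
            rcases abs_cases x with ⟨heq, _⟩ | ⟨heq, _⟩
            · rw [heq]
            · rw [heq, swPsi_even hr0 hr2]
        _ ≤ c := habs
    · rw [if_neg h]
      push_neg at h
      rw [← hEL]
      exact swE_antitoneOn hlam (by rw [hwL]; exact hwpos.le) h.le
  -- decay
  have htop : Tendsto ψ atTop (𝓝 0) := by
    apply Tendsto.congr' _ ((swE_tendsto_atTop hlam (a := aa)).comp tendsto_abs_atTop_atTop)
    filter_upwards [eventually_gt_atTop L] with x hx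
    have : ¬ |x| ≤ L := by
      rw [abs_of_pos (lt_trans hL hx)]; linarith
    rw [hψdef]
    simp only [Function.comp]
    rw [if_neg this]
  have hbot : Tendsto ψ atBot (𝓝 0) := by
    apply Tendsto.congr' _ ((swE_tendsto_atTop hlam (a := aa)).comp tendsto_abs_atBot_atTop)
    filter_upwards [eventually_lt_atBot (-L)] with x hx
    have : ¬ |x| ≤ L := by
      rw [abs_of_neg (by linarith)]; linarith
    rw [hψdef]
    simp only [Function.comp]
    rw [if_neg this]
  -- ODE away from ±L
  have hode : ∀ x : ℝ, x ≠ L → x ≠ -L →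
      HasDerivAt ψ (ψd x) x ∧ HasDerivAt ψd (lam ^ 2 * ψ x - 2 * ψ x ^ 3) x := by
    intro x hxL hxmL
    rcases lt_trichotomy |x| L with hlt | heq | hgt
    · -- interior
      have hU : {y : ℝ | |y| < L} ∈ 𝓝 x :=
        (isOpen_lt continuous_abs continuous_const).mem_nhds hlt
      have hψeq : ψ =ᶠ[𝓝 x] swPsi lam r := by
        filter_upwards [hU] with y hy
        rw [hψdef]; simp only; rw [if_pos hy.le]
      have hψdeq : ψd =ᶠ[𝓝 x] swPsid lam r := by
        filter_upwards [hU] with y hy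
        rw [hψddef]; simp only; rw [if_pos hy]
      constructor
      · rw [hψdeq.self_of_nhds]
        exact (hasDerivAt_swPsi hr0 hr2 x).congr_of_eventuallyEq hψeq
      · rw [hψeq.self_of_nhds]
        exact (hasDerivAt_swPsid hr0 hr2 x).congr_of_eventuallyEq hψdeq
    · exact absurd (abs_eq hL.le |>.1 heq) (by rintro (h | h) <;> [exact hxL h; exact hxmL h])
    · rcases abs_cases x with ⟨hax, hx0⟩ | ⟨hax, hx0⟩
      · -- x > L
        have hxgt : L < x := by rw [← hax]; exact hgt
        have hU : Ioi L ∈ 𝓝 x := Ioi_mem_nhds hxgt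
        have hψeq : ψ =ᶠ[𝓝 x] swE lam aa := by
          filter_upwards [hU] with y (hy : L < y)
          rw [hψdef]; simp only
          rw [if_neg (by rw [abs_of_pos (lt_trans hL hy)]; linarith),
            abs_of_pos (lt_trans hL hy)]
        have hψdeq : ψd =ᶠ[𝓝 x] swEd lam aa := by
          filter_upwards [hU] with y (hy : L < y)
          rw [hψddef]; simp only
          rw [if_neg (by rw [abs_of_pos (lt_trans hL hy)]; push_neg; linarith),
            if_pos (le_of_lt (lt_trans hL hy))]
        constructor
        · rw [hψdeq.self_of_nhds]
          exact (hasDerivAt_swE hlam x).congr_of_eventuallyEq hψeq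
        · rw [hψeq.self_of_nhds]
          exact (hasDerivAt_swEd hlam x).congr_of_eventuallyEq hψdeq
      · -- x < -L
        have hxlt : x < -L := by nlinarith [hgt, hax]
        have hU : Iio (-L) ∈ 𝓝 x := Iio_mem_nhds hxlt
        have hψeq : ψ =ᶠ[𝓝 x] fun y => swE lam aa (-y) := by
          filter_upwards [hU] with y (hy : y < -L)
          rw [hψdef]; simp only
          have hyneg : y < 0 := by linarith
          rw [if_neg (by rw [abs_of_neg hyneg]; linarith), abs_of_neg hyneg]
        have hψdeq : ψd =ᶠ[𝓝 x] fun y => -swEd lam aa (-y) := by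
          filter_upwards [hU] with y (hy : y < -L)
          have hyneg : y < 0 := by linarith
          rw [hψddef]; simp only
          rw [if_neg (by rw [abs_of_neg hyneg]; push_neg; linarith), if_neg (by linarith)]
        have hneg : HasDerivAt (fun y : ℝ => -y) (-1 : ℝ) x := hasDerivAt_neg x
        constructor
        · have hE := (hasDerivAt_swE (a := aa) hlam (-x)).comp x hneg
          have : HasDerivAt (fun y => swE lam aa (-y)) (-swEd lam aa (-x)) x := by
            refine hE.congr_deriv (Eq.symm ?_); ring
          rw [hψdeq.self_of_nhds]
          exact this.congr_of_eventuallyEq hψeq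
        · have hEd := (hasDerivAt_swEd (a := aa) hlam (-x)).comp x hneg
          have h3 : HasDerivAt (fun y => -swEd lam aa (-y))
              (lam^2 * swE lam aa (-x) - 2 * swE lam aa (-x)^3) x := by
            have := hEd.fun_neg
            refine this.congr_deriv (Eq.symm ?_); ring
          rw [hψeq.self_of_nhds]
          exact h3.congr_of_eventuallyEq hψdeq
  -- jump conditions
  have hjump : ∀ x : ℝ, x = L ∨ x = -L →
      ∃ a b : ℝ, Tendsto ψd (𝓝[>] x) (𝓝 a) ∧ Tendsto ψd (𝓝[<] x) (𝓝 b) ∧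
        a - b = -ε * ψ x := by
    intro x hx
    rcases hx with h | h
    · rw [h]
      refine ⟨swEd lam aa L, swPsid lam r L, ?_, ?_, ?_⟩
      · apply Tendsto.congr' _ ((hcontEd.continuousAt.continuousWithinAt
          (s := Ioi L)).tendsto)
        filter_upwards [self_mem_nhdsWithin] with y (hy : L < y)
        rw [hψddef]; simp only
        rw [if_neg (by rw [abs_of_pos (lt_trans hL hy)]; push_neg; linarith),
          if_pos (le_of_lt (lt_trans hL hy))]
      · apply Tendsto.congr' _ ((hcontPsid.continuousAt.continuousWithinAt
          (s := Iio L)).tendsto)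
        have hmem : Ioo (-L) L ∈ 𝓝[<] L := Ioo_mem_nhdsLT_of_mem ⟨by linarith, le_refl L⟩
        filter_upwards [hmem] with y hy
        rw [hψddef]; simp only
        rw [if_pos (abs_lt.2 ⟨hy.1, hy.2⟩)]
      · rw [hEdL, hmatch, hψL]
        ring
    · rw [h]
      refine ⟨swPsid lam r (-L), -swEd lam aa L, ?_, ?_, ?_⟩
      · apply Tendsto.congr' _ ((hcontPsid.continuousAt.continuousWithinAt
          (s := Ioi (-L))).tendsto)
        have hmem : Ioo (-L) L ∈ 𝓝[>] (-L) := Ioo_mem_nhdsGT_of_mem ⟨le_refl _, by linarith⟩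
        filter_upwards [hmem] with y hy
        rw [hψddef]; simp only
        rw [if_pos (abs_lt.2 ⟨hy.1, hy.2⟩)]
      · have hcont2 : ContinuousAt (fun y : ℝ => -swEd lam aa (-y)) (-L) :=
          (((hcontEd.comp continuous_neg).neg).continuousAt)
        have ht : Tendsto (fun y : ℝ => -swEd lam aa (-y)) (𝓝[<] (-L)) (𝓝 (-swEd lam aa L)) := by
          have h0 := (hcont2.continuousWithinAt (s := Iio (-L))).tendsto
          simpa using h0
        apply Tendsto.congr' _ ht
        filter_upwards [self_mem_nhdsWithin] with y (hy : y < -L)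
        have hyneg : y < 0 := by linarith
        rw [hψddef]; simp only
        rw [if_neg (by rw [abs_of_neg hyneg]; push_neg; linarith), if_neg (by linarith)]
      · have hψmL : ψ (-L) = c := by rw [← hψsymm, hψL]
        rw [swPsid_odd hr0 hr2, hEdL, hmatch, hψmL]
        ring
  exact ⟨ψ, ψd, ⟨hψcont, htop, hbot, hode, hjump⟩, hψeven, hψpos, hψsymm, hconc⟩
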